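/- Let τ > 0 and α > 0, and let π be a probability distribution on ℝ with Pr_{y∼π}[|y| ≥ τ] ≤ α·e^{−τ²/4}. Then for every measurable f : ℝ → ℝ with f and f² integrable with respect to π: |E_{y∼π}[f(y)·1(|y|≤τ)]| ≤ |E_{y∼π}[f(y)]| + √(α·e^{−τ²/4}·E_{y∼π}[f(y)²]). Moreover, if T ≥ τ ≥ 2 and β > 0 are such that Pr_{y∼π}[|y| ≥ t] ≤ α·e^{−t²/4} for all t ∈ [τ,T] and |f(y)| ≤ β·e^{y²/4} for all y with |y| ∈ [τ,T], then |E_{y∼π}[f(y)·1(|y|≤τ)]| ≤ |E_{y∼π}[f(y)]| + (1/4)·α·β·T² + √(α·e^{−T²/4}·E_{y∼π}[f(y)²]). -/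

import Mathlib

open MeasureTheory ProbabilityTheory

noncomputable section

/-! ### Generic statistical distances -/

/-- Total variation distance between two measures. -/
def tvDist {α : Type*} [MeasurableSpace α] (μ ν : Measure α) : ℝ :=
  ⨆ s : {s : Set α // MeasurableSet s}, |(μ s.1).toReal - (ν s.1).toReal|

/-- `ChiSqLe D P N δ` says that the degree-`D` truncated chi-squared divergence
`χ²_D(P‖N) = Var_N[L^{≤D}]` is at most `δ`, expressed through its variational
characterization: for every polynomial `f` of degree at most `D`,
`(E_P f - E_N f)² ≤ δ · Var_N f`. -/
def ChiSqLe {ι : Type*} (D : ℕ) (P N : Measure (ι → ℝ)) (δ : ℝ) : Prop :=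
  ∀ f : MvPolynomial ι ℝ, f.totalDegree ≤ D →
    (∫ x, MvPolynomial.eval x f ∂P - ∫ x, MvPolynomial.eval x f ∂N) ^ 2 ≤
      δ * ∫ x, (MvPolynomial.eval x f - ∫ y, MvPolynomial.eval y f ∂N) ^ 2 ∂N

/-- Untruncated chi-squared divergence `χ²(P‖Q) = E_Q[(dP/dQ)²] - 1`. -/
def chiSqFull {α : Type*} [MeasurableSpace α] (P Q : Measure α) : ℝ :=
  (∫ x, ((P.rnDeriv Q x).toReal) ^ 2 ∂Q) - 1

/-! ### Bernoulli / binomial setting -/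

/-- The ±1 Bernoulli measure on ℝ with `P(1) = γ`, `P(-1) = 1 - γ`. -/
def berOne (γ : ℝ) : Measure ℝ :=
  γ.toNNReal • Measure.dirac (1 : ℝ) + (1 - γ).toNNReal • Measure.dirac (-1 : ℝ)

instance (γ : ℝ) : IsFiniteMeasure (berOne γ) := by unfold berOne; infer_instance

/-- The product measure `Ber(γ)^n` on `{±1}^n ⊆ ℝ^n`. -/
def berPi (γ : ℝ) (n : ℕ) : Measure (Fin n → ℝ) := Measure.pi fun _ => berOne γ

/-- The hypercube `{±1}^n`. -/
def pmCube (n : ℕ) : Set (Fin n → ℝ) := {x | ∀ i, x i = 1 ∨ x i = -1}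

/-- `S_n`-symmetry of a distribution: invariance under relabeling of coordinates. -/
def PermInvariant {n : ℕ} (P : Measure (Fin n → ℝ)) : Prop :=
  ∀ σ : Equiv.Perm (Fin n), P.map (fun x => x ∘ σ) = P

/-- The noise operator `T_ε` (relative to `Ber(γ)`): each coordinate is kept with
probability `1 - ε` and resampled from `Ber(γ)` with probability `ε`, independently. -/
def Tnoise (γ ε : ℝ) {n : ℕ} (P : Measure (Fin n → ℝ)) : Measure (Fin n → ℝ) :=
  P.bind fun y =>
    Measure.pi fun i => (1 - ε).toNNReal • Measure.dirac (y i) + ε.toNNReal • berOne γ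

/-- The centered, normalized sum `y(x) = (1/(2√(nγ(1-γ)))) Σ_i (x_i - (2γ-1))`. -/
def yval (γ : ℝ) {n : ℕ} (x : Fin n → ℝ) : ℝ :=
  (1 / (2 * Real.sqrt (n * (γ * (1 - γ))))) * ∑ i, (x i - (2 * γ - 1))

/-! ### Krawtchouk polynomials -/

/-- `χ_S(x) = ∏_{i ∈ S} (x_i - (2γ-1))/(2√(γ(1-γ)))`. -/
def chiSet (γ : ℝ) {n : ℕ} (S : Finset (Fin n)) (x : Fin n → ℝ) : ℝ :=
  ∏ i ∈ S, (x i - (2 * γ - 1)) / (2 * Real.sqrt (γ * (1 - γ)))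

/-- `s_k(x) = Σ_{|S| = k} χ_S(x)`. -/
def sElem (γ : ℝ) {n : ℕ} (k : ℕ) (x : Fin n → ℝ) : ℝ :=
  ∑ S ∈ Finset.powersetCard k (Finset.univ : Finset (Fin n)), chiSet γ S x

/-- `Kr` is the (shifted, normalized) degree-`k` Krawtchouk polynomial for parameters
`n, γ`: it has degree at most `k` and satisfies `Kr(y(x)) = C(n,k)^{-1/2} s_k(x)`
for every `x ∈ {±1}^n`. -/
def IsKrawtchouk (γ : ℝ) (n k : ℕ) (Kr : Polynomial ℝ) : Prop :=
  Kr.natDegree ≤ k ∧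
    ∀ x ∈ pmCube n, Kr.eval (yval γ x) = (Real.sqrt (n.choose k))⁻¹ * sElem γ k x

/-! ### Gaussian vector setting -/

/-- The standard Gaussian measure `N(0, I_n)` on `ℝ^n`. -/
def stdGaussPi (n : ℕ) : Measure (Fin n → ℝ) := Measure.pi fun _ => gaussianReal 0 1

/-- The Ornstein–Uhlenbeck noise operator: the law of `√(1-ε)·y + √ε·g`. -/
def OU (ε : ℝ) {n : ℕ} (P : Measure (Fin n → ℝ)) : Measure (Fin n → ℝ) :=
  P.bind fun y =>
    (stdGaussPi n).map fun g i => Real.sqrt (1 - ε) * y i + Real.sqrt ε * g i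

/-- The normalized probabilist's Hermite polynomial `h_ℓ = He_ℓ / √(ℓ!)`. -/
def hermiteN (ℓ : ℕ) (x : ℝ) : ℝ :=
  (Polynomial.aeval x (Polynomial.hermite ℓ)) / Real.sqrt (Nat.factorial ℓ)

/-- `F_k : ℝ^n → ℝ^k`, `(F_k(x))_i = n^{-1/2} Σ_j h_i(x_j)` for `i = 1, …, k`. -/
def Fk (n k : ℕ) (x : Fin n → ℝ) : Fin k → ℝ :=
  fun i => (Real.sqrt n)⁻¹ * ∑ j, hermiteN (i.1 + 1) (x j)

/-- `ν_k`: law of `F_k(x)` for `x ∼ N(0, I_n)`. -/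
def nuK (n k : ℕ) : Measure (Fin k → ℝ) := (stdGaussPi n).map (Fk n k)

/-- `π_{k,ε}`: law of `F_k(x)` for `x ∼ OU_ε P`. -/
def piK (n k : ℕ) (ε : ℝ) (P : Measure (Fin n → ℝ)) : Measure (Fin k → ℝ) :=
  (OU ε P).map (Fk n k)

/-- A univariate polynomial is a sum of squares. -/
def IsSOS (p : Polynomial ℝ) : Prop :=
  ∃ (m : ℕ) (q : Fin m → Polynomial ℝ), p = ∑ i, (q i) ^ 2

/-- The set of `ℓ`-regular points of `ℝ^n`. -/
def regularSet (n ℓ : ℕ) : Set (Fin n → ℝ) :=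
  {y | ∀ p : Polynomial ℝ, p.natDegree ≤ 2 * ℓ → IsSOS p →
    (1 / 2) * (∫ g, p.eval g ∂(gaussianReal 0 1)) ≤ ((n : ℝ))⁻¹ * ∑ i, p.eval (y i) ∧
    ((n : ℝ))⁻¹ * ∑ i, p.eval (y i) ≤ (3 / 2) * ∫ g, p.eval g ∂(gaussianReal 0 1)}

/-- `π'_{k,ε}`: law of `F_k(x)` for `x ∼ OU_ε P'` where `P'` is `P` conditioned
on the set of `4k`-regular points. -/
def piK' (n k : ℕ) (ε : ℝ) (P : Measure (Fin n → ℝ)) : Measure (Fin k → ℝ) :=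
  (OU ε (ProbabilityTheory.cond P (regularSet n (4 * k)))).map (Fk n k)

/-- Euclidean norm on `ℝ^k` (written out, since the `Pi` norm is the sup norm). -/
def euclNorm {k : ℕ} (ξ : Fin k → ℝ) : ℝ := Real.sqrt (∑ i, (ξ i) ^ 2)

/-- Characteristic function (Fourier transform) of a measure on `ℝ^k`. -/
def charFn {k : ℕ} (μ : Measure (Fin k → ℝ)) (ξ : Fin k → ℝ) : ℂ :=
  ∫ x, Complex.exp (Complex.I * ((∑ i, ξ i * x i : ℝ) : ℂ)) ∂μ

/-! ### Gaussian matrix setting and subgraph counts -/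

/-- The edges of a graph on `Fin v`, as ordered pairs `(a, b)` with `a < b`. -/
def edgePairs {v : ℕ} (θ : SimpleGraph (Fin v)) : Finset (Fin v × Fin v) :=
  @Finset.filter _ (fun p => p.1 < p.2 ∧ θ.Adj p.1 p.2) (Classical.decPred _) Finset.univ

/-- Number of edges `e(θ)`. -/
def edgeCount {v : ℕ} (θ : SimpleGraph (Fin v)) : ℕ := (edgePairs θ).card

/-- Number of automorphisms of the graph `θ`. -/
def numAut {v : ℕ} (θ : SimpleGraph (Fin v)) : ℕ :=
  Nat.card {e : Equiv.Perm (Fin v) // ∀ a b, θ.Adj (e a) (e b) ↔ θ.Adj a b}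

/-- The injective maps `Fin v → Fin n`. -/
def injFuns (v n : ℕ) : Finset (Fin v → Fin n) :=
  @Finset.filter _ (fun f => Function.Injective f) (Classical.decPred _) Finset.univ

/-- The signed subgraph count `χ_θ(M) = |L_θ|^{-1/2} Σ_{π ∈ L_θ} ∏_{ab ∈ E(θ)} M_{π(a)π(b)}`,
where `|L_θ| = #inj/#aut` and the sum over distinct labelings is realized as
`(#aut)⁻¹` times the sum over all injective labelings. -/
def subCount {v : ℕ} (θ : SimpleGraph (Fin v)) {n : ℕ} (M : Fin n × Fin n → ℝ) : ℝ :=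
  (Real.sqrt (((injFuns v n).card : ℝ) / (numAut θ : ℝ)))⁻¹ *
    ((numAut θ : ℝ)⁻¹ * ∑ f ∈ injFuns v n, ∏ p ∈ edgePairs θ, M (f p.1, f p.2))

/-- The GOE-type law `N`: symmetric `n × n` matrix (as a function on `Fin n × Fin n`)
with i.i.d. `N(0,1)` entries on and above the diagonal. -/
def matGauss (n : ℕ) : Measure (Fin n × Fin n → ℝ) :=
  (Measure.pi fun _ : {p : Fin n × Fin n // p.1 ≤ p.2} => gaussianReal 0 1).map
    fun u p => if h : p.1 ≤ p.2 then u ⟨p, h⟩ else u ⟨(p.2, p.1), (le_total _ _).resolve_left h⟩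

/-- The set of symmetric matrices. -/
def symmMatSet (n : ℕ) : Set (Fin n × Fin n → ℝ) := {M | ∀ p, M p = M (p.2, p.1)}

/-- Ornstein–Uhlenbeck noise for matrices: the law of `√(1-ε)·M + √ε·G`. -/
def OUMat {n : ℕ} (ε : ℝ) (P : Measure (Fin n × Fin n → ℝ)) : Measure (Fin n × Fin n → ℝ) :=
  P.bind fun M => (matGauss n).map fun G p => Real.sqrt (1 - ε) * M p + Real.sqrt ε * G p

/-- `σ̃²(M) = max{Var_{G∼N}[χ_θ(√(1-ε)M + √εG)], (ε/2)(1-ε)^{e(θ)-1}}`. -/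
def tildeSig2 {v : ℕ} (θ : SimpleGraph (Fin v)) {n : ℕ} (ε : ℝ)
    (M : Fin n × Fin n → ℝ) : ℝ :=
  max
    (∫ G, (subCount θ (fun p => Real.sqrt (1 - ε) * M p + Real.sqrt ε * G p) -
        ∫ G', subCount θ (fun p => Real.sqrt (1 - ε) * M p + Real.sqrt ε * G' p)
          ∂(matGauss n)) ^ 2 ∂(matGauss n))
    (ε / 2 * (1 - ε) ^ (edgeCount θ - 1))

/-- The smoothed law `π̲_θ` (resp. `ν̲_θ`): law of
`(1-ε)^{e(θ)/2} χ_θ(M) + σ̃(M)·g` with `M ∼ P` and `g ∼ N(0,1)` independent. -/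
def smoothedLaw {v : ℕ} (θ : SimpleGraph (Fin v)) {n : ℕ} (ε : ℝ)
    (P : Measure (Fin n × Fin n → ℝ)) : Measure ℝ :=
  P.bind fun M => (gaussianReal 0 1).map fun g =>
    Real.sqrt ((1 - ε) ^ edgeCount θ) * subCount θ M + Real.sqrt (tildeSig2 θ ε M) * g

/-- `ν_θ`: law of `χ_θ(M)` for `M ∼ N`. -/
def nuTheta {v : ℕ} (θ : SimpleGraph (Fin v)) (n : ℕ) : Measure ℝ :=
  (matGauss n).map (subCount θ (n := n))

/-- `π_θ`: law of `χ_θ(M)` for `M ∼ OU_ε P`. -/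
def piTheta {v : ℕ} (θ : SimpleGraph (Fin v)) {n : ℕ} (ε : ℝ)
    (P : Measure (Fin n × Fin n → ℝ)) : Measure ℝ :=
  (OUMat ε P).map (subCount θ)

/-! ### Gaussian one-dimensional helpers -/

/-- Mean of `p(g)` for `g ∼ N(0,1)`. -/
def gaussMean (p : Polynomial ℝ) : ℝ := ∫ g, p.eval g ∂(gaussianReal 0 1)

/-- Variance of `p(g)` for `g ∼ N(0,1)`. -/
def gaussVar (p : Polynomial ℝ) : ℝ :=
  ∫ g, (p.eval g - gaussMean p) ^ 2 ∂(gaussianReal 0 1)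

/-- `E_{g∼N(0,1)}[exp(i p(g))]`. -/
def gaussCharPoly (p : Polynomial ℝ) : ℂ :=
  ∫ g, Complex.exp (Complex.I * ((p.eval g : ℝ) : ℂ)) ∂(gaussianReal 0 1)



lemma cs_lemma (π : Measure ℝ) [IsFiniteMeasure π] (f : ℝ → ℝ)
    (hint : Integrable f π) (hint2 : Integrable (fun y => (f y) ^ 2) π)
    (S : Set ℝ) (hS : MeasurableSet S) :
    ∫ y in S, |f y| ∂π ≤ Real.sqrt ((π S).toReal * ∫ y, (f y) ^ 2 ∂π) := by
  set I : ℝ := ∫ y, (f y) ^ 2 ∂π with hIdef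
  have hI0 : 0 ≤ I := integral_nonneg fun y => sq_nonneg _
  set P : ℝ := (π S).toReal with hPdef
  have hP0 : 0 ≤ P := ENNReal.toReal_nonneg
  rcases eq_or_lt_of_le hP0 with hP | hP
  · have hπS : π S = 0 := by
      have := measure_ne_top π S
      simpa [hPdef, ENNReal.toReal_eq_zero_iff, this] using hP.symm
    rw [Measure.restrict_eq_zero.mpr hπS]
    simp [Real.sqrt_nonneg]
  rcases eq_or_lt_of_le hI0 with hI | hI
  · have hf0 : f =ᵐ[π] 0 := by
      have h2 : (fun y => (f y) ^ 2) =ᵐ[π] 0 := by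
        refine (integral_eq_zero_iff_of_nonneg (fun y => sq_nonneg _) hint2).mp hI.symm
      filter_upwards [h2] with y hy
      have : (f y) ^ 2 = 0 := hy
      exact by simpa using sq_eq_zero_iff.mp this
    have : ∫ y in S, |f y| ∂π = 0 := by
      rw [integral_eq_zero_iff_of_nonneg (fun y => abs_nonneg _)
        (hint.abs.restrict)]
      filter_upwards [ae_restrict_of_ae hf0] with y hy
      simp [hy]
    rw [this]; exact Real.sqrt_nonneg _
  · set a : ℝ := Real.sqrt I / Real.sqrt P with hadef
    have hsP : 0 < Real.sqrt P := Real.sqrt_pos.mpr hP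
    have hsI : 0 < Real.sqrt I := Real.sqrt_pos.mpr hI
    have ha : 0 < a := div_pos hsI hsP
    have hpt : ∀ y, |f y| ≤ a / 2 + (f y) ^ 2 / (2 * a) := by
      intro y
      have h := sq_nonneg (a - |f y|)
      have h2 : 2 * a * |f y| ≤ a ^ 2 + (f y) ^ 2 := by nlinarith [sq_abs (f y)]
      rw [div_add_div _ _ (two_ne_zero) (by positivity : (2 : ℝ) * a ≠ 0)]
      rw [le_div_iff₀ (by positivity)]
      nlinarith
    have hintS : Integrable (fun y => a / 2 + (f y) ^ 2 / (2 * a)) (π.restrict S) :=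
      (integrable_const _).add ((hint2.restrict).div_const _)
    have step1 : ∫ y in S, |f y| ∂π ≤ ∫ y in S, (a / 2 + (f y) ^ 2 / (2 * a)) ∂π :=
      integral_mono (hint.abs.restrict) hintS hpt
    have step2 : ∫ y in S, (a / 2 + (f y) ^ 2 / (2 * a)) ∂π
        = P * (a / 2) + (∫ y in S, (f y) ^ 2 ∂π) / (2 * a) := by
      rw [integral_add (integrable_const _) ((hint2.restrict).div_const _),
        setIntegral_const, integral_div]
      simp [smul_eq_mul]
      exact Or.inl rfl
    have step3 : ∫ y in S, (f y) ^ 2 ∂π ≤ I :=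
      setIntegral_le_integral hint2 (Filter.Eventually.of_forall fun y => sq_nonneg _)
    have key : P * (a / 2) + I / (2 * a) = Real.sqrt (P * I) := by
      have hPs : P = Real.sqrt P * Real.sqrt P := (Real.mul_self_sqrt hP0).symm
      have hIs : I = Real.sqrt I * Real.sqrt I := (Real.mul_self_sqrt hI0).symm
      rw [Real.sqrt_mul hP0, hadef]
      field_simp
      nlinarith [Real.mul_self_sqrt hP0, Real.mul_self_sqrt hI0]
    calc ∫ y in S, |f y| ∂π ≤ P * (a / 2) + (∫ y in S, (f y) ^ 2 ∂π) / (2 * a) := by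
          rw [← step2]; exact step1
      _ ≤ P * (a / 2) + I / (2 * a) := by
          gcongr
      _ = Real.sqrt (P * I) := key



lemma shell_lemma (π : Measure ℝ) [IsProbabilityMeasure π] (α β τ T : ℝ)
    (hα : 0 < α) (hβ : 0 < β) (hτ2 : 2 ≤ τ) (hτT : τ ≤ T)
    (htail : ∀ t ∈ Set.Icc τ T, (π {y : ℝ | t ≤ |y|}).toReal ≤ α * Real.exp (-(t ^ 2) / 4))
    (f : ℝ → ℝ) (hmeas : Measurable f)
    (hf : ∀ y : ℝ, |y| ∈ Set.Icc τ T → |f y| ≤ β * Real.exp (y ^ 2 / 4)) :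
    ∫ y in {y : ℝ | τ < |y| ∧ |y| ≤ T}, |f y| ∂π ≤ (1 / 4) * α * β * T ^ 2 := by
  have hτ0 : (0:ℝ) < τ := lt_of_lt_of_le two_pos hτ2
  have hT0 : (0:ℝ) < T := lt_of_lt_of_le hτ0 hτT
  set S : Set ℝ := {y : ℝ | τ < |y| ∧ |y| ≤ T} with hSdef
  have hScont : Continuous fun y : ℝ => |y| := continuous_abs
  have hSmeas : MeasurableSet S := by
    have h1 : MeasurableSet {y : ℝ | τ < |y|} := measurableSet_lt measurable_const hScont.measurable
    have h2 : MeasurableSet {y : ℝ | |y| ≤ T} := measurableSet_le hScont.measurable measurable_const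
    exact h1.inter h2
  set w : ℝ → ℝ := fun t => t / 2 * Real.exp (t ^ 2 / 4) with hwdef
  have hwcont : Continuous w := by fun_prop
  have hgcont : Continuous (fun y : ℝ => Real.exp (y ^ 2 / 4)) := by fun_prop
  have hwmono : ∀ t ∈ Set.Ioc τ T, w t ≤ w T := by
    intro t ht
    have h0t : 0 < t := lt_trans hτ0 ht.1
    have hsq : t ^ 2 ≤ T ^ 2 := by nlinarith [ht.2]
    have hE2 := Real.exp_le_exp.mpr (by linarith : t ^ 2 / 4 ≤ T ^ 2 / 4)
    have hE : 0 < Real.exp (t ^ 2 / 4) := Real.exp_pos _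
    exact mul_le_mul (by linarith [ht.2]) hE2 hE.le (by linarith)
  set C : ℝ := T / 2 * Real.exp (T ^ 2 / 4) with hCdef
  -- FTC identity
  have hderiv : ∀ t : ℝ, HasDerivAt (fun s => Real.exp (s ^ 2 / 4)) (w t) t := by
    intro t
    have h1 : HasDerivAt (fun s : ℝ => s ^ 2 / 4) (t / 2) t := by
      have := (hasDerivAt_pow 2 t).div_const 4
      exact this.congr_deriv (by norm_num; ring)
    have := h1.exp
    convert this using 1
    simp [hwdef]; ring
  have hFTC : ∀ y : ℝ, τ ≤ |y| →
      ∫ t in Set.Ioc τ |y|, w t = Real.exp (y ^ 2 / 4) - Real.exp (τ ^ 2 / 4) := by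
    intro y hy
    have h := intervalIntegral.integral_eq_sub_of_hasDerivAt
      (f := fun s => Real.exp (s ^ 2 / 4)) (a := τ) (b := |y|)
      (fun t _ => hderiv t) (hwcont.intervalIntegrable _ _)
    rw [← intervalIntegral.integral_of_le hy, h]
    simp [sq_abs]
  -- pointwise decomposition on S
  have hptwise : ∀ y ∈ S, Real.exp (y ^ 2 / 4)
      = Real.exp (τ ^ 2 / 4) + ∫ t in Set.Ioc τ T, (Set.Ioc τ |y|).indicator w t := by
    intro y hy
    rw [setIntegral_indicator measurableSet_Ioc]
    have hinter : Set.Ioc τ T ∩ Set.Ioc τ |y| = Set.Ioc τ |y| :=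
      Set.inter_eq_self_of_subset_right (Set.Ioc_subset_Ioc_right hy.2)
    rw [hinter, hFTC y hy.1.le]; ring
  -- integrability of exp(y^2/4) on S
  have hgbound : ∀ᵐ y ∂(π.restrict S), ‖Real.exp (y ^ 2 / 4)‖ ≤ Real.exp (T ^ 2 / 4) := by
    filter_upwards [ae_restrict_mem hSmeas] with y hy
    rw [Real.norm_of_nonneg (Real.exp_pos _).le]
    apply Real.exp_le_exp.mpr
    have : y ^ 2 ≤ T ^ 2 := by nlinarith [hy.1, hy.2, abs_nonneg y, sq_abs y]
    linarith
  have hgint : IntegrableOn (fun y => Real.exp (y ^ 2 / 4)) S π :=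
    Integrable.mono' (integrable_const _) hgcont.aestronglyMeasurable hgbound
  -- step A
  have hfabs_int : IntegrableOn (fun y => |f y|) S π := by
    apply Integrable.mono' (hgint.const_mul β) hmeas.abs.aestronglyMeasurable.restrict
    filter_upwards [ae_restrict_mem hSmeas] with y hy
    rw [Real.norm_of_nonneg (abs_nonneg _)]
    exact hf y ⟨hy.1.le, hy.2⟩
  have stepA : ∫ y in S, |f y| ∂π ≤ β * ∫ y in S, Real.exp (y ^ 2 / 4) ∂π := by
    rw [← integral_const_mul]
    refine integral_mono_ae hfabs_int (hgint.const_mul β) ?_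
    filter_upwards [ae_restrict_mem hSmeas] with y hy
    exact hf y ⟨hy.1.le, hy.2⟩
  -- Fubini setup
  set I : Set ℝ := Set.Ioc τ T with hIdef
  set ν : Measure ℝ := volume.restrict I with hνdef
  have hνfin : IsFiniteMeasure ν := by
    constructor
    rw [hνdef, Measure.restrict_apply_univ]
    exact measure_Ioc_lt_top
  set F : ℝ → ℝ → ℝ := fun y t => (Set.Ioc τ (|y|)).indicator w t with hFdef
  have hFuncurry : Function.uncurry F
      = {p : ℝ × ℝ | p.2 ∈ Set.Ioc τ |p.1|}.indicator (fun p => w p.2) := by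
    ext p
    simp only [Function.uncurry, hFdef, Set.indicator_apply, Set.mem_setOf_eq]
  have hFmeas : Measurable (Function.uncurry F) := by
    have hset : MeasurableSet {p : ℝ × ℝ | p.2 ∈ Set.Ioc τ |p.1|} := by
      have h1 : MeasurableSet {p : ℝ × ℝ | τ < p.2} :=
        measurableSet_lt measurable_const measurable_snd
      have h2 : MeasurableSet {p : ℝ × ℝ | p.2 ≤ |p.1|} :=
        measurableSet_le measurable_snd measurable_fst.abs
      have : {p : ℝ × ℝ | p.2 ∈ Set.Ioc τ |p.1|} = {p : ℝ × ℝ | τ < p.2} ∩ {p : ℝ × ℝ | p.2 ≤ |p.1|} := by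
        ext p
        simp only [Set.mem_Ioc, Set.mem_setOf_eq, Set.mem_inter_iff]
      rw [this]
      exact h1.inter h2
    rw [hFuncurry]
    exact (hwcont.measurable.comp measurable_snd).indicator hset
  have hFint : Integrable (Function.uncurry F) ((π.restrict S).prod ν) := by
    apply Integrable.mono' (integrable_const C) hFmeas.aestronglyMeasurable
    rw [hνdef, Measure.prod_restrict]
    filter_upwards [ae_restrict_mem (hSmeas.prod measurableSet_Ioc)] with p hp
    have hp2 : p.2 ∈ I := hp.2
    have hw2 : w p.2 ≤ C := hwmono p.2 hp2
    have hw0 : 0 ≤ w p.2 := by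
      have : 0 < p.2 := lt_trans hτ0 hp2.1
      have := Real.exp_pos (p.2 ^ 2 / 4)
      rw [hwdef]; positivity
    have hC0 : 0 ≤ C := by
      rw [hCdef]; positivity
    rw [hFuncurry]
    by_cases hmem : p ∈ {p : ℝ × ℝ | p.2 ∈ Set.Ioc τ |p.1|}
    · rw [Set.indicator_of_mem hmem, Real.norm_of_nonneg hw0]; exact hw2
    · rw [Set.indicator_of_notMem hmem]; simpa using hC0
  -- swap
  have hswap : ∫ y in S, (∫ t, F y t ∂ν) ∂π = ∫ t, (∫ y in S, F y t ∂π) ∂ν :=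
    integral_integral_swap hFint
  -- inner bound for fixed t
  have hinner : ∀ t ∈ I, ∫ y in S, F y t ∂π ≤ α * (t / 2) := by
    intro t ht
    have hFt : ∀ y, F y t = Set.indicator {y : ℝ | t ≤ |y|} (fun _ => w t) y := by
      intro y
      simp only [hFdef, Set.indicator_apply, Set.mem_Ioc, Set.mem_setOf_eq]
      by_cases h : t ≤ |y|
      · simp [h, ht.1]
      · simp [h]
    have hAmeas : MeasurableSet {y : ℝ | t ≤ |y|} :=
      measurableSet_le measurable_const hScont.measurable
    have : ∫ y in S, F y t ∂π = w t * (π.restrict S {y : ℝ | t ≤ |y|}).toReal := by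
      simp_rw [hFt]
      rw [integral_indicator_const _ hAmeas]
      simp [mul_comm]
      exact Or.inl rfl
    rw [this]
    have hle : (π.restrict S {y : ℝ | t ≤ |y|}).toReal ≤ (π {y : ℝ | t ≤ |y|}).toReal := by
      apply ENNReal.toReal_mono (measure_ne_top _ _)
      rw [Measure.restrict_apply hAmeas]
      exact measure_mono Set.inter_subset_left
    have htail' := htail t ⟨ht.1.le, ht.2⟩
    have hw0 : 0 ≤ w t := by
      have : 0 < t := lt_trans hτ0 ht.1
      have := Real.exp_pos (t ^ 2 / 4)
      rw [hwdef]; positivity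
    calc w t * (π.restrict S {y : ℝ | t ≤ |y|}).toReal
        ≤ w t * (α * Real.exp (-(t ^ 2) / 4)) := by
          apply mul_le_mul_of_nonneg_left (le_trans hle htail') hw0
      _ = α * (t / 2) := by
          have h1 : Real.exp (t ^ 2 / 4) * Real.exp (-(t ^ 2) / 4) = 1 := by
            rw [← Real.exp_add, (show t ^ 2 / 4 + -(t ^ 2) / 4 = 0 by ring), Real.exp_zero]
          rw [hwdef]
          dsimp only
          linear_combination (α * t / 2) * h1
  -- integrate the inner bound over t
  have hν_int : Integrable (fun t => ∫ y in S, F y t ∂π) ν :=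
    hFint.integral_prod_right
  have hlin_int : Integrable (fun t : ℝ => α * (t / 2)) ν := by
    rw [hνdef, hIdef]
    exact (continuous_const.mul (continuous_id.div_const 2)).integrableOn_Ioc
  have houter : ∫ t, (∫ y in S, F y t ∂π) ∂ν ≤ α * ((T ^ 2 - τ ^ 2) / 4) := by
    have h1 : ∫ t, (∫ y in S, F y t ∂π) ∂ν ≤ ∫ t, α * (t / 2) ∂ν := by
      refine integral_mono_ae hν_int hlin_int ?_
      rw [hνdef]
      filter_upwards [ae_restrict_mem measurableSet_Ioc] with t ht
      exact hinner t ht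
    have h2 : ∫ t, α * (t / 2) ∂ν = α * ((T ^ 2 - τ ^ 2) / 4) := by
      rw [hνdef, hIdef, ← intervalIntegral.integral_of_le hτT]
      have : ∀ t : ℝ, α * (t / 2) = (α / 2) * t := by intro t; ring
      simp_rw [this]
      rw [intervalIntegral.integral_const_mul, integral_id]
      ring
    linarith
  -- combine
  have hΦint : Integrable (fun y => ∫ t, F y t ∂ν) (π.restrict S) :=
    hFint.integral_prod_left
  have hdecomp : ∫ y in S, Real.exp (y ^ 2 / 4) ∂π
      = Real.exp (τ ^ 2 / 4) * (π S).toReal + ∫ y in S, (∫ t, F y t ∂ν) ∂π := by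
    rw [setIntegral_congr_fun hSmeas hptwise, integral_add (integrable_const _) hΦint,
      setIntegral_const, smul_eq_mul, mul_comm]
    rfl
  have hPS : (π S).toReal ≤ α * Real.exp (-(τ ^ 2) / 4) := by
    refine le_trans ?_ (htail τ ⟨le_refl τ, hτT⟩)
    apply ENNReal.toReal_mono (measure_ne_top _ _)
    apply measure_mono
    intro y hy
    exact hy.1.le
  have hexp1 : Real.exp (τ ^ 2 / 4) * Real.exp (-(τ ^ 2) / 4) = 1 := by
    rw [← Real.exp_add, (show τ ^ 2 / 4 + -(τ ^ 2) / 4 = 0 by ring), Real.exp_zero]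
  have hgS : ∫ y in S, Real.exp (y ^ 2 / 4) ∂π ≤ α + α * ((T ^ 2 - τ ^ 2) / 4) := by
    rw [hdecomp]
    have h1 : Real.exp (τ ^ 2 / 4) * (π S).toReal ≤ α := by
      calc Real.exp (τ ^ 2 / 4) * (π S).toReal
          ≤ Real.exp (τ ^ 2 / 4) * (α * Real.exp (-(τ ^ 2) / 4)) :=
            mul_le_mul_of_nonneg_left hPS (Real.exp_pos _).le
        _ = α := by linear_combination α * hexp1
    have h2 : ∫ y in S, (∫ t, F y t ∂ν) ∂π ≤ α * ((T ^ 2 - τ ^ 2) / 4) := by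
      rw [hswap]; exact houter
    linarith
  have hτsq : (4:ℝ) ≤ τ ^ 2 := by nlinarith
  calc ∫ y in S, |f y| ∂π ≤ β * ∫ y in S, Real.exp (y ^ 2 / 4) ∂π := stepA
    _ ≤ β * (α + α * ((T ^ 2 - τ ^ 2) / 4)) := by
        apply mul_le_mul_of_nonneg_left hgS hβ.le
    _ ≤ (1 / 4) * α * β * T ^ 2 := by
        nlinarith [mul_nonneg (mul_pos hα hβ).le (by linarith : (0:ℝ) ≤ τ ^ 2 - 4)]


theorem stmt7 (τ α : ℝ) (hτ : 0 < τ) (hα : 0 < α) (π : Measure ℝ)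
    [IsProbabilityMeasure π]
    (htail : (π {y : ℝ | τ ≤ |y|}).toReal ≤ α * Real.exp (-(τ ^ 2) / 4))
    (f : ℝ → ℝ) (hmeas : Measurable f)
    (hint : Integrable f π) (hint2 : Integrable (fun y => (f y) ^ 2) π) :
    (|∫ y in {y : ℝ | |y| ≤ τ}, f y ∂π| ≤
        |∫ y, f y ∂π| + Real.sqrt (α * Real.exp (-(τ ^ 2) / 4) * ∫ y, (f y) ^ 2 ∂π)) ∧
      ∀ T β : ℝ, τ ≤ T → 2 ≤ τ → 0 < β →
        (∀ t ∈ Set.Icc τ T, (π {y : ℝ | t ≤ |y|}).toReal ≤ α * Real.exp (-(t ^ 2) / 4)) →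
        (∀ y : ℝ, |y| ∈ Set.Icc τ T → |f y| ≤ β * Real.exp (y ^ 2 / 4)) →
        |∫ y in {y : ℝ | |y| ≤ τ}, f y ∂π| ≤
          |∫ y, f y ∂π| + (1 / 4) * α * β * T ^ 2 +
            Real.sqrt (α * Real.exp (-(T ^ 2) / 4) * ∫ y, (f y) ^ 2 ∂π) := by
  have habs : Continuous fun y : ℝ => |y| := continuous_abs
  have hI0 : 0 ≤ ∫ y, (f y) ^ 2 ∂π := integral_nonneg fun y => sq_nonneg _
  set B : Set ℝ := {y : ℝ | |y| ≤ τ} with hBdef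
  have hBmeas : MeasurableSet B := measurableSet_le habs.measurable measurable_const
  have hBc : Bᶜ = {y : ℝ | τ < |y|} := by
    ext y; simp [hBdef, not_le]
  have hsplit : ∫ y in B, f y ∂π = (∫ y, f y ∂π) - ∫ y in Bᶜ, f y ∂π := by
    have := integral_add_compl hBmeas hint
    linarith
  have hkey : |∫ y in B, f y ∂π| ≤ |∫ y, f y ∂π| + ∫ y in Bᶜ, |f y| ∂π := by
    rw [hsplit]
    have h1 : |(∫ y, f y ∂π) - ∫ y in Bᶜ, f y ∂π| ≤ |∫ y, f y ∂π| + |∫ y in Bᶜ, f y ∂π| :=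
      abs_sub _ _
    have h2 : |∫ y in Bᶜ, f y ∂π| ≤ ∫ y in Bᶜ, |f y| ∂π := by
      simpa using norm_integral_le_integral_norm (μ := π.restrict Bᶜ) f
    linarith
  -- generic tail Cauchy-Schwarz bound
  have hcs : ∀ t : ℝ, (π {y : ℝ | t ≤ |y|}).toReal ≤ α * Real.exp (-(t ^ 2) / 4) →
      ∫ y in {y : ℝ | t < |y|}, |f y| ∂π ≤
        Real.sqrt (α * Real.exp (-(t ^ 2) / 4) * ∫ y, (f y) ^ 2 ∂π) := by
    intro t ht
    have hSm : MeasurableSet {y : ℝ | t < |y|} :=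
      measurableSet_lt measurable_const habs.measurable
    refine le_trans (cs_lemma π f hint hint2 _ hSm) (Real.sqrt_le_sqrt ?_)
    have hmono : (π {y : ℝ | t < |y|}).toReal ≤ (π {y : ℝ | t ≤ |y|}).toReal := by
      apply ENNReal.toReal_mono (measure_ne_top _ _)
      exact measure_mono fun y hy => le_of_lt (Set.mem_setOf_eq ▸ hy)
    exact mul_le_mul_of_nonneg_right (le_trans hmono ht) hI0
  constructor
  · have := hcs τ htail
    rw [← hBc] at this
    linarith
  · intro T β hτT hτ2 hβ htail' hf
    have hbig : ∫ y in Bᶜ, |f y| ∂π ≤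
        (1 / 4) * α * β * T ^ 2 +
          Real.sqrt (α * Real.exp (-(T ^ 2) / 4) * ∫ y, (f y) ^ 2 ∂π) := by
      have hunion : Bᶜ = {y : ℝ | τ < |y| ∧ |y| ≤ T} ∪ {y : ℝ | T < |y|} := by
        rw [hBc]; ext y
        simp only [Set.mem_setOf_eq, Set.mem_union]
        constructor
        · intro h
          rcases le_or_gt (|y|) T with h2 | h2
          · exact Or.inl ⟨h, h2⟩
          · exact Or.inr h2
        · rintro (⟨h, _⟩ | h)
          · exact h
          · exact lt_of_le_of_lt hτT h
      have hshellm : MeasurableSet {y : ℝ | τ < |y| ∧ |y| ≤ T} :=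
        (measurableSet_lt measurable_const habs.measurable).inter
          (measurableSet_le habs.measurable measurable_const)
      have htailm : MeasurableSet {y : ℝ | T < |y|} :=
        measurableSet_lt measurable_const habs.measurable
      have hdisj : Disjoint {y : ℝ | τ < |y| ∧ |y| ≤ T} {y : ℝ | T < |y|} := by
        rw [Set.disjoint_left]
        rintro y ⟨_, h2⟩ h3
        exact absurd h3 (not_lt.mpr h2)
      have hsum : ∫ y in Bᶜ, |f y| ∂π =
          (∫ y in {y : ℝ | τ < |y| ∧ |y| ≤ T}, |f y| ∂π) + ∫ y in {y : ℝ | T < |y|}, |f y| ∂π := by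
        rw [hunion]
        exact setIntegral_union hdisj htailm (hint.abs.integrableOn) (hint.abs.integrableOn)
      rw [hsum]
      have h1 := shell_lemma π α β τ T hα hβ hτ2 hτT htail' f hmeas hf
      have h2 := hcs T (htail' T ⟨hτT, le_refl T⟩)
      linarith
    linarith

end
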